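/- arXiv:1710.07787 — 10 statements merged into one kernel-verified Lean document; each statement's English description precedes it below -/
import Mathlib

section
/- Fix V₀ > 0 and P̃_g, Q̃_g ∈ ℝ. There exists a power-flow solution, i.e. a pair of complex numbers (V_g, J) with V_g = V₀ + J and V_g·conj(J) = P̃_g + i·Q̃_g, if and only if the discriminant D := V₀⁴/4 + V₀²·P̃_g − Q̃_g² is nonnegative. -/
/-!
Writing `J = x + i y`, the equation `(V₀ + J) · conj J = P̃g + i Q̃g` splits into
`-V₀ y = Q̃g` and `x² + V₀ x + y² = P̃g`. The first fixes `y = -Q̃g / V₀`, which turns the second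
into a real quadratic in `x`, solvable exactly when its discriminant `4 D / V₀²` is nonnegative.
-/

open Complex ComplexConjugate

lemma exists_quadratic_eq_zero_iff_discrim_nonneg {a b c : ℝ} (ha : a ≠ 0) :
    (∃ x, a * (x * x) + b * x + c = 0) ↔ 0 ≤ discrim a b c := by
  constructor
  · rintro ⟨x, hx⟩
    rw [discrim_eq_sq_of_quadratic_eq_zero hx]
    positivity
  · intro hd
    exact exists_quadratic_eq_zero ha ⟨√(discrim a b c), (Real.mul_self_sqrt hd).symm⟩

lemma ofReal_add_mul_conj_eq_iff (a p q : ℝ) (J : ℂ) :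
    (a + J) * conj J = p + q * I ↔
      J.re * J.re + a * J.re + J.im * J.im = p ∧ -(a * J.im) = q := by
  simp only [Complex.ext_iff, mul_re, mul_im, add_re, add_im, ofReal_re, ofReal_im, conj_re,
    conj_im, I_re, I_im, mul_zero, mul_one, zero_add, add_zero, sub_zero]
  constructor <;> rintro ⟨hre, him⟩ <;> constructor <;> linarith

lemma exists_ofReal_add_mul_conj_eq_iff {a : ℝ} (ha : a ≠ 0) (p q : ℝ) :
    (∃ J : ℂ, (a + J) * conj J = p + q * I) ↔
      ∃ x : ℝ, 1 * (x * x) + a * x + ((q / a) ^ 2 - p) = 0 := by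
  simp only [ofReal_add_mul_conj_eq_iff]
  constructor
  · rintro ⟨J, hre, him⟩
    have hy : J.im = -(q / a) := by
      field_simp
      linarith
    exact ⟨J.re, by rw [← hre, hy]; ring⟩
  · rintro ⟨x, hx⟩
    refine ⟨⟨x, -(q / a)⟩, ?_, ?_⟩
    · linear_combination hx
    · field_simp

/-- Existence of a two-bus power-flow solution (in rotated coordinates) is
equivalent to nonnegativity of the discriminant `D = V₀⁴/4 + V₀²·P̃g − Q̃g²`. -/
theorem powerflow_solution_exists_iff_discriminant_nonneg
    (V₀ Pg Qg : ℝ) (hV₀ : 0 < V₀) :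
    (∃ Vg J : ℂ, Vg = (V₀ : ℂ) + J ∧
        Vg * (starRingEnd ℂ) J = (Pg : ℂ) + (Qg : ℂ) * Complex.I) ↔
      0 ≤ V₀ ^ 4 / 4 + V₀ ^ 2 * Pg - Qg ^ 2 := by
  have hdiscrim : discrim 1 V₀ ((Qg / V₀) ^ 2 - Pg) =
      4 / V₀ ^ 2 * (V₀ ^ 4 / 4 + V₀ ^ 2 * Pg - Qg ^ 2) := by
    rw [discrim]
    field_simp
    ring
  calc (∃ Vg J : ℂ, Vg = (V₀ : ℂ) + J ∧ Vg * conj J = (Pg : ℂ) + (Qg : ℂ) * I)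
      ↔ ∃ J : ℂ, (V₀ + J) * conj J = Pg + Qg * I := by
        rw [exists_comm]
        simp only [exists_eq_left]
    _ ↔ ∃ x : ℝ, 1 * (x * x) + V₀ * x + ((Qg / V₀) ^ 2 - Pg) = 0 :=
        exists_ofReal_add_mul_conj_eq_iff hV₀.ne' Pg Qg
    _ ↔ 0 ≤ discrim 1 V₀ ((Qg / V₀) ^ 2 - Pg) :=
        exists_quadratic_eq_zero_iff_discrim_nonneg one_ne_zero
    _ ↔ 0 ≤ V₀ ^ 4 / 4 + V₀ ^ 2 * Pg - Qg ^ 2 := by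
        rw [hdiscrim]
        exact mul_nonneg_iff_of_pos_left (by positivity)
end

section
/- Fix V₀ > 0 and P̃_g, Q̃_g ∈ ℝ with D := V₀⁴/4 + V₀²·P̃_g − Q̃_g² ≥ 0, and set a := P̃_g + V₀²/2. Every power-flow solution (V_g, J) satisfies either (|V_g|², |J|²) = (a + √D, a − √D) or (|V_g|², |J|²) = (a − √D, a + √D); conversely, for each choice of sign ε ∈ {+1, −1} there exists a power-flow solution with |V_g|² = a + ε√D and |J|² = a − ε√D. -/
/-!
Write `S = P̃g + i Q̃g`, `a = P̃g + V₀²/2`. For a solution, `u = |Vg|²` and `v = |J|²` satisfy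
`u + v = V₀² + 2 Re S = 2a` and `u v = |S|²`, so they are the two roots of `t² − 2at + |S|²`,
whose discriminant `a² − |S|²` is `D`. Conversely, `J = (conj S − v) / V₀` is a solution
exactly when `|J|² = v`, i.e. when `(P̃g − v)² + Q̃g² = V₀² v`, which is the same quadratic in `v`.
-/

open ComplexConjugate

theorem sq_norm_add_add_sq_norm_eq (c J : ℂ) :
    ‖c + J‖ ^ 2 + ‖J‖ ^ 2 = ‖c‖ ^ 2 + 2 * ((c + J) * conj J).re := by
  simp only [Complex.sq_norm, Complex.normSq_apply, Complex.mul_re, Complex.add_re,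
    Complex.add_im, Complex.conj_re, Complex.conj_im]
  ring

theorem eq_add_sqrt_and_eq_sub_sqrt_or_swap_of_add_eq {u v a : ℝ} (h : u + v = 2 * a) :
    (u = a + √(a ^ 2 - u * v) ∧ v = a - √(a ^ 2 - u * v)) ∨
      (u = a - √(a ^ 2 - u * v) ∧ v = a + √(a ^ 2 - u * v)) := by
  have hsq : a ^ 2 - u * v = (u - a) ^ 2 := by
    rw [show v = 2 * a - u by linarith]; ring
  rw [hsq, Real.sqrt_sq_eq_abs]
  rcases abs_choice (u - a) with h' | h' <;> rw [h']
  · left; constructor <;> linarith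
  · right; constructor <;> linarith

theorem exists_add_mul_conj_eq_of_sq_add_sq_eq {c : ℝ} (hc : c ≠ 0) (S : ℂ) {v : ℝ}
    (hv : (S.re - v) ^ 2 + S.im ^ 2 = c ^ 2 * v) :
    ∃ J : ℂ, (c + J) * conj J = S ∧ ‖J‖ ^ 2 = v := by
  set J : ℂ := (conj S - v) / c
  have hJ : ‖J‖ ^ 2 = v := by
    rw [Complex.sq_norm, Complex.normSq_div, Complex.normSq_ofReal]
    simp only [Complex.normSq_apply, Complex.sub_re, Complex.sub_im, Complex.conj_re,
      Complex.conj_im, Complex.ofReal_re, Complex.ofReal_im]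
    field_simp
    linear_combination hv
  refine ⟨J, ?_, hJ⟩
  have hconj : (c : ℂ) * conj J = S - v := by
    simp only [J, map_div₀, map_sub, Complex.conj_conj, Complex.conj_ofReal]
    exact mul_div_cancel₀ _ (Complex.ofReal_ne_zero.mpr hc)
  rw [add_mul, hconj, Complex.mul_conj, ← Complex.sq_norm, hJ]
  ring

/-- With nonnegative discriminant `D`, every two-bus power-flow solution has
`(|Vg|², |J|²) = (a + √D, a − √D)` or `(a − √D, a + √D)` where
`a = P̃g + V₀²/2`, and conversely both sign choices are realised by some
solution. -/
theorem powerflow_solution_voltage_loss_characterisation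
    (V₀ Pg Qg : ℝ) (hV₀ : 0 < V₀)
    (hD : 0 ≤ V₀ ^ 4 / 4 + V₀ ^ 2 * Pg - Qg ^ 2) :
    (∀ Vg J : ℂ, Vg = (V₀ : ℂ) + J →
        Vg * (starRingEnd ℂ) J = (Pg : ℂ) + (Qg : ℂ) * Complex.I →
        (‖Vg‖ ^ 2 =
              (Pg + V₀ ^ 2 / 2) + Real.sqrt (V₀ ^ 4 / 4 + V₀ ^ 2 * Pg - Qg ^ 2) ∧
            ‖J‖ ^ 2 =
              (Pg + V₀ ^ 2 / 2) - Real.sqrt (V₀ ^ 4 / 4 + V₀ ^ 2 * Pg - Qg ^ 2)) ∨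
          (‖Vg‖ ^ 2 =
              (Pg + V₀ ^ 2 / 2) - Real.sqrt (V₀ ^ 4 / 4 + V₀ ^ 2 * Pg - Qg ^ 2) ∧
            ‖J‖ ^ 2 =
              (Pg + V₀ ^ 2 / 2) + Real.sqrt (V₀ ^ 4 / 4 + V₀ ^ 2 * Pg - Qg ^ 2))) ∧
      (∀ ε : ℝ, (ε = 1 ∨ ε = -1) →
        ∃ Vg J : ℂ, Vg = (V₀ : ℂ) + J ∧
          Vg * (starRingEnd ℂ) J = (Pg : ℂ) + (Qg : ℂ) * Complex.I ∧
          ‖Vg‖ ^ 2 =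
            (Pg + V₀ ^ 2 / 2) + ε * Real.sqrt (V₀ ^ 4 / 4 + V₀ ^ 2 * Pg - Qg ^ 2) ∧
          ‖J‖ ^ 2 =
            (Pg + V₀ ^ 2 / 2) - ε * Real.sqrt (V₀ ^ 4 / 4 + V₀ ^ 2 * Pg - Qg ^ 2)) := by
  set S : ℂ := (Pg : ℂ) + (Qg : ℂ) * Complex.I
  have hSre : S.re = Pg := by simp [S]
  have hSim : S.im = Qg := by simp [S]
  have hD_eq : V₀ ^ 4 / 4 + V₀ ^ 2 * Pg - Qg ^ 2
      = (Pg + V₀ ^ 2 / 2) ^ 2 - (Pg ^ 2 + Qg ^ 2) := by ring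
  have hsum : ∀ J : ℂ, (V₀ + J) * conj J = S →
      ‖(V₀ : ℂ) + J‖ ^ 2 + ‖J‖ ^ 2 = 2 * (Pg + V₀ ^ 2 / 2) := by
    intro J hS
    rw [sq_norm_add_add_sq_norm_eq, hS, hSre, Complex.norm_real, Real.norm_eq_abs, sq_abs]
    ring
  refine ⟨?_, fun ε hε => ?_⟩
  · rintro Vg J rfl hS
    have hprod : ‖(V₀ : ℂ) + J‖ ^ 2 * ‖J‖ ^ 2 = Pg ^ 2 + Qg ^ 2 := by
      rw [← mul_pow, ← Complex.norm_conj J, ← norm_mul, hS, Complex.sq_norm,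
        Complex.normSq_apply, hSre, hSim]
      ring
    rw [hD_eq, ← hprod]
    exact eq_add_sqrt_and_eq_sub_sqrt_or_swap_of_add_eq (hsum J hS)
  · set v := (Pg + V₀ ^ 2 / 2) - ε * √(V₀ ^ 4 / 4 + V₀ ^ 2 * Pg - Qg ^ 2)
    have hε2 : ε ^ 2 = 1 := by rcases hε with rfl | rfl <;> norm_num
    have hv : (S.re - v) ^ 2 + S.im ^ 2 = V₀ ^ 2 * v := by
      rw [hSre, hSim]
      linear_combination (√(V₀ ^ 4 / 4 + V₀ ^ 2 * Pg - Qg ^ 2)) ^ 2 * hε2 + Real.sq_sqrt hD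
    obtain ⟨J, hS, hJ⟩ := exists_add_mul_conj_eq_of_sq_add_sq_eq hV₀.ne' S hv
    refine ⟨V₀ + J, J, rfl, hS, ?_, hJ⟩
    linear_combination hsum J hS - hJ
end

section
/- Fix V₀ > 0 and P̃_g, Q̃_g ∈ ℝ. Every power-flow solution (V_g, J) satisfies the quartic identity |V_g|⁴ − (V₀² + 2·P̃_g)·|V_g|² + P̃_g² + Q̃_g² = 0; in other words, |V_g|² is a root of x² − (V₀² + 2·P̃_g)·x + (P̃_g² + Q̃_g²) = 0. -/
/-! Since `V₀` is real, `|V_g|² = V_g·conj(V_g) = V_g·(V₀ + conj J) = V₀·V_g + S̃_g`. Taking squared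
moduli of `V₀·V_g = |V_g|² − S̃_g` gives `V₀²·|V_g|² = (|V_g|² − P̃_g)² + Q̃_g²`, which expands to the
quartic. -/

open ComplexConjugate

lemma ofReal_mul_eq_sq_norm_sub_mul_conj {V₀ : ℝ} {Vg J : ℂ} (hVg : Vg = (V₀ : ℂ) + J) :
    (V₀ : ℂ) * Vg = (‖Vg‖ : ℂ) ^ 2 - Vg * conj J := by
  have hnorm : (‖Vg‖ : ℂ) ^ 2 = Vg * ((V₀ : ℂ) + conj J) := by
    rw [← Complex.mul_conj', hVg, map_add, Complex.conj_ofReal]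
  linear_combination -hnorm

lemma sq_norm_ofReal_sub_add_mul_I (x P Q : ℝ) :
    ‖(x : ℂ) - (P + Q * Complex.I)‖ ^ 2 = (x - P) ^ 2 + Q ^ 2 := by
  rw [show (x : ℂ) - (P + Q * Complex.I) = ((x - P : ℝ) : ℂ) + ((-Q : ℝ) : ℂ) * Complex.I by
      push_cast; ring,
    Complex.sq_norm, Complex.normSq_add_mul_I, neg_sq]

theorem powerflow_voltage_quartic_identity_general
    (V₀ Pg Qg : ℝ)
    (Vg J : ℂ) (hKVL : Vg = (V₀ : ℂ) + J)
    (hS : Vg * (starRingEnd ℂ) J = (Pg : ℂ) + (Qg : ℂ) * Complex.I) :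
    ‖Vg‖ ^ 4 - (V₀ ^ 2 + 2 * Pg) * ‖Vg‖ ^ 2
        + Pg ^ 2 + Qg ^ 2 = 0 ∧
      (‖Vg‖ ^ 2) ^ 2 - (V₀ ^ 2 + 2 * Pg) * (‖Vg‖ ^ 2)
        + (Pg ^ 2 + Qg ^ 2) = 0 := by
  have key : V₀ ^ 2 * ‖Vg‖ ^ 2 = (‖Vg‖ ^ 2 - Pg) ^ 2 + Qg ^ 2 := by
    rw [← sq_norm_ofReal_sub_add_mul_I, ← hS, Complex.ofReal_pow,
      ← ofReal_mul_eq_sq_norm_sub_mul_conj hKVL, norm_mul, Complex.norm_real, Real.norm_eq_abs,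
      mul_pow, sq_abs]
  constructor <;> linear_combination -key

/-- Every two-bus power-flow solution satisfies the quartic identity
`|Vg|⁴ − (V₀² + 2·P̃g)·|Vg|² + P̃g² + Q̃g² = 0`; i.e. `|Vg|²` is a root of
`x² − (V₀² + 2·P̃g)·x + (P̃g² + Q̃g²)`. -/
theorem powerflow_voltage_quartic_identity
    (V₀ Pg Qg : ℝ) (hV₀ : 0 < V₀)
    (Vg J : ℂ) (hKVL : Vg = (V₀ : ℂ) + J)
    (hS : Vg * (starRingEnd ℂ) J = (Pg : ℂ) + (Qg : ℂ) * Complex.I) :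
    ‖Vg‖ ^ 4 - (V₀ ^ 2 + 2 * Pg) * ‖Vg‖ ^ 2
        + Pg ^ 2 + Qg ^ 2 = 0 ∧
      (‖Vg‖ ^ 2) ^ 2 - (V₀ ^ 2 + 2 * Pg) * (‖Vg‖ ^ 2)
        + (Pg ^ 2 + Qg ^ 2) = 0 :=
  powerflow_voltage_quartic_identity_general V₀ Pg Qg Vg J hKVL hS
end

section
/- Fix V₀ > 0, V₊ > 0 and P̃_g, Q̃_g ∈ ℝ. There exists a power-flow solution (V_g, J) with |V_g| = V₊ if and only if (P̃_g − V₊²)² + Q̃_g² = V₀²·V₊²; that is, the set of rotated generator powers admitting a solution at voltage magnitude V₊ is exactly the circle of radius V₀·V₊ centred at (V₊², 0) in the (P̃_g, Q̃_g)-plane. -/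
open Complex ComplexConjugate

/-! Writing `J = V_g - V₀`, the power equation reads `S̃_g = |V_g|² - V₀ V_g`. At `|V_g| = V₊` it
determines `V_g = (V₊² - S̃_g) / V₀`, and the constraint `|V_g| = V₊` becomes
`|V₊² - S̃_g| = V₀ V₊`, which is the circle. -/

lemma mul_conj_sub_ofReal (z : ℂ) (r : ℝ) : z * conj (z - r) = ((‖z‖ ^ 2 : ℝ) : ℂ) - r * z := by
  rw [map_sub, conj_ofReal, mul_sub, mul_conj, normSq_eq_norm_sq, mul_comm z]

lemma exists_mul_conj_sub_ofReal_eq_and_norm_eq_iff {r ρ : ℝ} (hr : 0 < r) (hρ : 0 ≤ ρ) (S : ℂ) :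
    (∃ z : ℂ, z * conj (z - r) = S ∧ ‖z‖ = ρ) ↔ ‖((ρ ^ 2 : ℝ) : ℂ) - S‖ = r * ρ := by
  constructor
  · rintro ⟨z, rfl, rfl⟩
    rw [mul_conj_sub_ofReal, sub_sub_cancel, norm_mul, norm_real, Real.norm_of_nonneg hr.le]
  · intro hS
    set z := (((ρ ^ 2 : ℝ) : ℂ) - S) / r
    have hz : ‖z‖ = ρ := by
      rw [norm_div, hS, norm_real, Real.norm_of_nonneg hr.le, mul_div_cancel_left₀ _ hr.ne']
    refine ⟨z, ?_, hz⟩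
    rw [mul_conj_sub_ofReal, hz, mul_div_cancel₀ _ (ofReal_ne_zero.mpr hr.ne'), sub_sub_cancel]

lemma norm_ofReal_sub_eq_iff {a c : ℝ} (P Q : ℝ) (hc : 0 ≤ c) :
    ‖(a : ℂ) - (P + Q * I)‖ = c ↔ (P - a) ^ 2 + Q ^ 2 = c ^ 2 := by
  rw [← sq_eq_sq₀ (norm_nonneg _) hc, ← normSq_eq_norm_sq, normSq_apply]
  simp only [sub_re, sub_im, add_re, add_im, ofReal_re, ofReal_im, mul_re, mul_im, I_re, I_im]
  ring_nf

/-- A two-bus power-flow solution with generator-bus voltage magnitude `V₊`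
exists iff `(P̃g − V₊²)² + Q̃g² = V₀²·V₊²`, i.e. the rotated powers lie on the
circle of radius `V₀·V₊` centred at `(V₊², 0)`. -/
theorem powerflow_solution_at_voltage_iff_circle
    (V₀ Vp Pg Qg : ℝ) (hV₀ : 0 < V₀) (hVp : 0 < Vp) :
    (∃ Vg J : ℂ, Vg = (V₀ : ℂ) + J ∧
        Vg * (starRingEnd ℂ) J = (Pg : ℂ) + (Qg : ℂ) * Complex.I ∧
        ‖Vg‖ = Vp) ↔
      (Pg - Vp ^ 2) ^ 2 + Qg ^ 2 = V₀ ^ 2 * Vp ^ 2 := by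
  have eliminate_J : (∃ Vg J : ℂ, Vg = (V₀ : ℂ) + J ∧
      Vg * conj J = (Pg : ℂ) + (Qg : ℂ) * I ∧ ‖Vg‖ = Vp) ↔
      ∃ Vg : ℂ, Vg * conj (Vg - V₀) = (Pg : ℂ) + (Qg : ℂ) * I ∧ ‖Vg‖ = Vp :=
    ⟨fun ⟨Vg, _, hJ, hS, hV⟩ => ⟨Vg, by subst hJ; rwa [add_sub_cancel_left], hV⟩,
      fun ⟨Vg, hS, hV⟩ => ⟨Vg, Vg - V₀, by ring, hS, hV⟩⟩
  rw [eliminate_J, exists_mul_conj_sub_ofReal_eq_and_norm_eq_iff hV₀ hVp.le,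
    norm_ofReal_sub_eq_iff _ _ (by positivity), mul_pow]
end

section
/- Fix V₀ > 0 and line parameters R > 0, X > 0 with |Z| := √(R² + X²). For every M ∈ ℝ there exist P̃_g > 0 and a power-flow solution (V_g, J) for the rotated power S̃_g = P̃_g + i·0 (zero rotated reactive power) whose delivered real power P₀ := (R·(P̃_g − |J|²) − X·0)/|Z|² exceeds M. Hence, in the absence of operational constraints, the real power transferred from the generator to the grid is unbounded. -/
/-! A real line current `J = t > 0` solves the power-flow equation with `V_g = V₀ + t` and the
real rotated power `P̃_g = (V₀ + t) t`. The loss `|J|² = t²` cancels the quadratic part of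
`P̃_g`, so the delivered power is `R V₀ t / |Z|²`, which grows linearly in `t`. -/

open Filter

theorem ofReal_add_mul_conj_ofReal (V₀ t : ℝ) :
    ((V₀ : ℂ) + t) * starRingEnd ℂ (t : ℂ) = (((V₀ + t) * t : ℝ) : ℂ) + (0 : ℝ) * Complex.I := by
  simp [Complex.conj_ofReal]

theorem delivered_power_of_real_current (V₀ R X t : ℝ) :
    (R * ((V₀ + t) * t - ‖(t : ℂ)‖ ^ 2) - X * 0) / Real.sqrt (R ^ 2 + X ^ 2) ^ 2
      = R * V₀ / (R ^ 2 + X ^ 2) * t := by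
  rw [Complex.norm_real, Real.norm_eq_abs, sq_abs, Real.sq_sqrt (by positivity)]
  ring

theorem powerflow_delivered_power_unbounded_general
    (V₀ R X : ℝ) (hV₀ : 0 < V₀) (hR : 0 < R) :
    ∀ M : ℝ, ∃ (Pg : ℝ) (Vg J : ℂ), 0 < Pg ∧
      Vg = (V₀ : ℂ) + J ∧
      Vg * (starRingEnd ℂ) J = (Pg : ℂ) + (0 : ℝ) * Complex.I ∧
      M < (R * (Pg - ‖J‖ ^ 2) - X * 0) / Real.sqrt (R ^ 2 + X ^ 2) ^ 2 := by
  intro M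
  have hslope : 0 < R * V₀ / (R ^ 2 + X ^ 2) := by positivity
  obtain ⟨t, hM, ht⟩ :=
    (((tendsto_id.const_mul_atTop hslope).eventually_gt_atTop M).and
      (eventually_gt_atTop 0)).exists
  refine ⟨(V₀ + t) * t, V₀ + t, t, by positivity, rfl, ofReal_add_mul_conj_ofReal V₀ t, ?_⟩
  rw [delivered_power_of_real_current]
  exact hM

/-- Without operational constraints, the real power delivered to the grid is
unbounded: for any `M` there is a rotated power `P̃g > 0` (with zero rotated
reactive power) and a power-flow solution whose delivered real power
`(R·(P̃g − |J|²) − X·0)/|Z|²` exceeds `M`. -/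
theorem powerflow_delivered_power_unbounded
    (V₀ R X : ℝ) (hV₀ : 0 < V₀) (hR : 0 < R) (hX : 0 < X) :
    ∀ M : ℝ, ∃ (Pg : ℝ) (Vg J : ℂ), 0 < Pg ∧
      Vg = (V₀ : ℂ) + J ∧
      Vg * (starRingEnd ℂ) J = (Pg : ℂ) + (0 : ℝ) * Complex.I ∧
      M < (R * (Pg - ‖J‖ ^ 2) - X * 0) / Real.sqrt (R ^ 2 + X ^ 2) ^ 2 :=
  powerflow_delivered_power_unbounded_general V₀ R X hV₀ hR
end

section
/- Fix V₀ > 0, R > 0, X > 0, |Z| := √(R² + X²), and P̃_g, Q̃_g ∈ ℝ with Q̃_g ≤ 0 and zero discriminant, D := V₀⁴/4 + V₀²·P̃_g − Q̃_g² = 0 (the solution boundary). Then any power-flow solution (V_g, J) satisfies |V_g|² = P̃_g + V₀²/2 ≥ V₀²/4, and its delivered real power P₀ := (R·(P̃_g − |J|²) − X·Q̃_g)/|Z|² equals (V₀²/|Z|)·(−R/(2|Z|) + (X/|Z|)·√(|V_g|²/V₀² − 1/4)). -/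
/-!
Writing `J = a + i b`, the power-flow equation splits into `V₀ b = -Q̃g` and `V₀ a + |J|² = P̃g`,
and completing the square gives `(V₀ (V₀ + 2a))² = 4D`. On the boundary `D = 0` the double root
is `a = -V₀/2`, so `V_g = V₀/2 + i b` and `J = -V₀/2 + i b` have the same modulus, equal to
`P̃g + V₀²/2`, and `√(|V_g|²/V₀² - 1/4) = |b|/V₀ = -Q̃g/V₀²`. The delivered-power formula is then
an identity of rational functions.
-/

open Complex ComplexConjugate

namespace PowerFlow

theorem norm_ofReal_add_sq (V₀ : ℝ) (J : ℂ) :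
    ‖(V₀ : ℂ) + J‖ ^ 2 = ‖J‖ ^ 2 + V₀ * (V₀ + 2 * J.re) := by
  simp only [Complex.sq_norm, normSq_apply, add_re, add_im, ofReal_re, ofReal_im]
  ring

theorem re_im_of_mul_conj_eq {V₀ Pg Qg : ℝ} {J : ℂ}
    (hS : ((V₀ : ℂ) + J) * conj J = Pg + Qg * I) :
    V₀ * J.re + ‖J‖ ^ 2 = Pg ∧ V₀ * J.im = -Qg := by
  have hexp : ((V₀ : ℂ) + J) * conj J = V₀ * conj J + (‖J‖ ^ 2 : ℝ) := by
    rw [add_mul, RCLike.mul_conj, ofReal_pow]; rfl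
  rw [hexp] at hS
  constructor
  · simpa only [add_re, re_ofReal_mul, conj_re, ofReal_re, mul_re, I_re, I_im, ofReal_im,
      mul_zero, zero_mul, sub_zero, add_zero] using congrArg re hS
  · have him := congrArg im hS
    simp only [add_im, conj_im, ofReal_im, mul_im, I_re, I_im, ofReal_re, mul_zero, zero_mul,
      mul_one, zero_add, add_zero] at him
    linarith

theorem sq_mul_add_two_re_of_mul_conj_eq {V₀ Pg Qg : ℝ} {J : ℂ}
    (hS : ((V₀ : ℂ) + J) * conj J = Pg + Qg * I) :
    (V₀ * (V₀ + 2 * J.re)) ^ 2 = 4 * (V₀ ^ 4 / 4 + V₀ ^ 2 * Pg - Qg ^ 2) := by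
  obtain ⟨hre, him⟩ := re_im_of_mul_conj_eq hS
  have hnorm := Complex.sq_norm_sub_sq_re J
  linear_combination 4 * V₀ ^ 2 * hre - 4 * V₀ ^ 2 * hnorm - 4 * (V₀ * J.im - Qg) * him

theorem re_eq_of_mul_conj_eq_of_discr_eq_zero {V₀ Pg Qg : ℝ} {J : ℂ} (hV₀ : V₀ ≠ 0)
    (hD : V₀ ^ 4 / 4 + V₀ ^ 2 * Pg - Qg ^ 2 = 0)
    (hS : ((V₀ : ℂ) + J) * conj J = Pg + Qg * I) :
    J.re = -(V₀ / 2) := by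
  have hsq := sq_mul_add_two_re_of_mul_conj_eq hS
  rw [hD, mul_zero, sq_eq_zero_iff, mul_eq_zero] at hsq
  rcases hsq with h | h
  · exact absurd h hV₀
  · linarith

theorem sqrt_norm_sq_div_sub_eq {V₀ Qg : ℝ} {J : ℂ} (hV₀ : V₀ ≠ 0) (hQ : Qg ≤ 0)
    (hre : J.re = -(V₀ / 2)) (him : V₀ * J.im = -Qg) :
    Real.sqrt (‖J‖ ^ 2 / V₀ ^ 2 - 1 / 4) = -Qg / V₀ ^ 2 := by
  have hnorm : ‖J‖ ^ 2 = (V₀ / 2) ^ 2 + J.im ^ 2 := by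
    rw [← Complex.sq_norm_sub_sq_re J, hre]; ring
  have him' : J.im = -Qg / V₀ := by rw [eq_div_iff hV₀, mul_comm, him]
  have harg : ‖J‖ ^ 2 / V₀ ^ 2 - 1 / 4 = (Qg / V₀ ^ 2) ^ 2 := by
    rw [hnorm, him']; field_simp; ring
  rw [harg, Real.sqrt_sq_eq_abs, abs_of_nonpos (div_nonpos_of_nonpos_of_nonneg hQ (sq_nonneg _)),
    neg_div]

theorem delivered_power_eq (V₀ R X Pg Qg z : ℝ) (hV₀ : V₀ ≠ 0) :
    (R * (Pg - (Pg + V₀ ^ 2 / 2)) - X * Qg) / z ^ 2 =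
      (V₀ ^ 2 / z) * (-(R / (2 * z)) + (X / z) * (-Qg / V₀ ^ 2)) := by
  rcases eq_or_ne z 0 with rfl | hz
  · simp
  · field_simp
    ring

end PowerFlow

open PowerFlow in
theorem powerflow_boundary_delivered_power_general
    (V₀ R X Pg Qg : ℝ) (hV₀ : 0 < V₀)
    (hQ : Qg ≤ 0)
    (hD : V₀ ^ 4 / 4 + V₀ ^ 2 * Pg - Qg ^ 2 = 0)
    (Vg J : ℂ) (hKVL : Vg = (V₀ : ℂ) + J)
    (hS : Vg * (starRingEnd ℂ) J = (Pg : ℂ) + (Qg : ℂ) * Complex.I) :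
    ‖Vg‖ ^ 2 = Pg + V₀ ^ 2 / 2 ∧
      V₀ ^ 2 / 4 ≤ ‖Vg‖ ^ 2 ∧
      (R * (Pg - ‖J‖ ^ 2) - X * Qg) / Real.sqrt (R ^ 2 + X ^ 2) ^ 2 =
        (V₀ ^ 2 / Real.sqrt (R ^ 2 + X ^ 2)) *
          (-(R / (2 * Real.sqrt (R ^ 2 + X ^ 2))) +
            (X / Real.sqrt (R ^ 2 + X ^ 2)) *
              Real.sqrt (‖Vg‖ ^ 2 / V₀ ^ 2 - 1 / 4)) := by
  subst hKVL
  obtain ⟨hPg, him⟩ := re_im_of_mul_conj_eq hS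
  have hre := re_eq_of_mul_conj_eq_of_discr_eq_zero hV₀.ne' hD hS
  have hVg : ‖(V₀ : ℂ) + J‖ ^ 2 = ‖J‖ ^ 2 := by
    rw [norm_ofReal_add_sq, hre]; ring
  have hJ : ‖J‖ ^ 2 = Pg + V₀ ^ 2 / 2 := by
    rw [hre] at hPg; linarith
  refine ⟨hVg.trans hJ, ?_, ?_⟩
  · calc V₀ ^ 2 / 4 = J.re * J.re := by rw [hre]; ring
      _ ≤ ‖J‖ ^ 2 := (re_sq_le_normSq J).trans_eq (Complex.sq_norm J).symm
      _ = ‖(V₀ : ℂ) + J‖ ^ 2 := hVg.symm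
  · rw [hVg, sqrt_norm_sq_div_sub_eq hV₀.ne' hQ hre him, hJ]
    exact delivered_power_eq V₀ R X Pg Qg _ hV₀.ne'

/-- On the solution boundary (zero discriminant, with `Q̃g ≤ 0`), every
power-flow solution has `|Vg|² = P̃g + V₀²/2 ≥ V₀²/4`, and its delivered real
power equals `(V₀²/|Z|)·(−R/(2|Z|) + (X/|Z|)·√(|Vg|²/V₀² − 1/4))`. -/
theorem powerflow_boundary_delivered_power
    (V₀ R X Pg Qg : ℝ) (hV₀ : 0 < V₀) (hR : 0 < R) (hX : 0 < X)
    (hQ : Qg ≤ 0)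
    (hD : V₀ ^ 4 / 4 + V₀ ^ 2 * Pg - Qg ^ 2 = 0)
    (Vg J : ℂ) (hKVL : Vg = (V₀ : ℂ) + J)
    (hS : Vg * (starRingEnd ℂ) J = (Pg : ℂ) + (Qg : ℂ) * Complex.I) :
    ‖Vg‖ ^ 2 = Pg + V₀ ^ 2 / 2 ∧
      V₀ ^ 2 / 4 ≤ ‖Vg‖ ^ 2 ∧
      (R * (Pg - ‖J‖ ^ 2) - X * Qg) / Real.sqrt (R ^ 2 + X ^ 2) ^ 2 =
        (V₀ ^ 2 / Real.sqrt (R ^ 2 + X ^ 2)) *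
          (-(R / (2 * Real.sqrt (R ^ 2 + X ^ 2))) +
            (X / Real.sqrt (R ^ 2 + X ^ 2)) *
              Real.sqrt (‖Vg‖ ^ 2 / V₀ ^ 2 - 1 / 4)) :=
  powerflow_boundary_delivered_power_general V₀ R X Pg Qg hV₀ hQ hD Vg J hKVL hS
end

section
/- (Thermal loss-induced limit, Lemma 1.) Fix V₀ > 0, V₊ > 0, R > 0, X > 0, |Z| := √(R² + X²), a current limit I₊ > 0, and set P̂ := (V₊² − V₀² + |Z|²·I₊²)/2. Assume V₊² − V₀·V₊ ≤ P̂ ≤ V₊² + V₀·V₊. Then over all (P̃_g, Q̃_g) ∈ ℝ² on the voltage locus (P̃_g − V₊²)² + Q̃_g² = V₀²·V₊² satisfying the thermal constraint V₀² + 2·P̃_g − V₊² ≤ |Z|²·I₊² (the rotated loss of the solution at voltage V₊ does not exceed |Z|²·I₊²), the maximum of P̃_g equals P̂, attained exactly at Q̃_g = ±√((V₊·I₊·|Z|)² − P̂²). Moreover, at the point (P̂, Q̂) with Q̂ := −√((V₊·I₊·|Z|)² − P̂²), the delivered real power equals P_g − I₊²·R, where P_g := (R·P̂ − X·Q̂)/|Z|².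 -/
/-!
In rotated coordinates the voltage locus is the circle of radius `V₀·V₊` about `(V₊², 0)`, and
since the rotated loss `V₀² + 2·P̃ − V₊²` increases with `P̃`, the thermal constraint is the
half-plane `P̃ ≤ P̂`. The hypotheses on `P̂` say that the line `P̃ = P̂` meets the circle, so `P̂` is
the maximum; the intersection points have `Q̃² = V₀²V₊² − (P̂ − V₊²)² = (V₊·I₊·|Z|)² − P̂²`, and at
`P̂` the loss is exactly `|Z|²·I₊²`, which turns the delivered power into `P_g − I₊²·R`.
-/

lemma circle_eq_iff {c r2 a q : ℝ} (h : (a - c) ^ 2 ≤ r2) :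
    (a - c) ^ 2 + q ^ 2 = r2 ↔
      q = Real.sqrt (r2 - (a - c) ^ 2) ∨ q = -Real.sqrt (r2 - (a - c) ^ 2) := by
  rw [← sq_eq_sq_iff_eq_or_eq_neg, Real.sq_sqrt (sub_nonneg.2 h)]
  constructor <;> intro <;> linarith

lemma isGreatest_circle_inter_Iic {c r2 a : ℝ} (h : (a - c) ^ 2 ≤ r2) :
    IsGreatest {p : ℝ | ∃ q : ℝ, (p - c) ^ 2 + q ^ 2 = r2 ∧ p ≤ a} a :=
  ⟨⟨_, (circle_eq_iff h).2 (Or.inl rfl), le_rfl⟩, fun _ ⟨_, _, hp⟩ => hp⟩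

theorem thermal_loss_induced_limit_general
    (V₀ Vp R X Ip Phat : ℝ)
    (hR : 0 < R)
    (hPhat : Phat =
      (Vp ^ 2 - V₀ ^ 2 + Real.sqrt (R ^ 2 + X ^ 2) ^ 2 * Ip ^ 2) / 2)
    (hlo : Vp ^ 2 - V₀ * Vp ≤ Phat) (hhi : Phat ≤ Vp ^ 2 + V₀ * Vp) :
    IsGreatest
        {p : ℝ | ∃ q : ℝ, (p - Vp ^ 2) ^ 2 + q ^ 2 = V₀ ^ 2 * Vp ^ 2 ∧
          V₀ ^ 2 + 2 * p - Vp ^ 2 ≤ Real.sqrt (R ^ 2 + X ^ 2) ^ 2 * Ip ^ 2}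
        Phat ∧
      (∀ q : ℝ,
        ((Phat - Vp ^ 2) ^ 2 + q ^ 2 = V₀ ^ 2 * Vp ^ 2 ∧
            V₀ ^ 2 + 2 * Phat - Vp ^ 2 ≤ Real.sqrt (R ^ 2 + X ^ 2) ^ 2 * Ip ^ 2) ↔
          (q = Real.sqrt ((Vp * Ip * Real.sqrt (R ^ 2 + X ^ 2)) ^ 2 - Phat ^ 2) ∨
            q = -Real.sqrt ((Vp * Ip * Real.sqrt (R ^ 2 + X ^ 2)) ^ 2 - Phat ^ 2))) ∧
      ((R * Phat -
          X * (-Real.sqrt ((Vp * Ip * Real.sqrt (R ^ 2 + X ^ 2)) ^ 2 - Phat ^ 2))) /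
            Real.sqrt (R ^ 2 + X ^ 2) ^ 2 -
          R * (V₀ ^ 2 + 2 * Phat - Vp ^ 2) / Real.sqrt (R ^ 2 + X ^ 2) ^ 2 =
        (R * Phat -
          X * (-Real.sqrt ((Vp * Ip * Real.sqrt (R ^ 2 + X ^ 2)) ^ 2 - Phat ^ 2))) /
            Real.sqrt (R ^ 2 + X ^ 2) ^ 2 - Ip ^ 2 * R) := by
  have hloss_le_iff (p : ℝ) :
      V₀ ^ 2 + 2 * p - Vp ^ 2 ≤ Real.sqrt (R ^ 2 + X ^ 2) ^ 2 * Ip ^ 2 ↔ p ≤ Phat := by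
    rw [hPhat]; constructor <;> intro <;> linarith
  have hloss_eq : V₀ ^ 2 + 2 * Phat - Vp ^ 2 = Real.sqrt (R ^ 2 + X ^ 2) ^ 2 * Ip ^ 2 := by
    rw [hPhat]; ring
  have hmeets : (Phat - Vp ^ 2) ^ 2 ≤ V₀ ^ 2 * Vp ^ 2 := by
    rw [← mul_pow]; exact sq_le_sq' (by linarith) (by linarith)
  have hdisc : (Vp * Ip * Real.sqrt (R ^ 2 + X ^ 2)) ^ 2 - Phat ^ 2 =
      V₀ ^ 2 * Vp ^ 2 - (Phat - Vp ^ 2) ^ 2 := by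
    rw [hPhat]; ring
  have hZ : Real.sqrt (R ^ 2 + X ^ 2) ^ 2 ≠ 0 :=
    (pow_pos (Real.sqrt_pos.2 (add_pos_of_pos_of_nonneg (pow_pos hR 2) (sq_nonneg X))) 2).ne'
  refine ⟨?_, fun q => ?_, ?_⟩
  · simpa only [hloss_le_iff] using isGreatest_circle_inter_Iic hmeets
  · rw [hdisc, ← circle_eq_iff hmeets]
    exact and_iff_left hloss_eq.le
  · rw [hloss_eq]
    congr 1
    field_simp

/-- Thermal loss-induced limit (Lemma 1): on the voltage locus
`(P̃g − V₊²)² + Q̃g² = V₀²·V₊²` subject to the thermal constraint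
`V₀² + 2·P̃g − V₊² ≤ |Z|²·I₊²`, the maximum of `P̃g` is
`P̂ = (V₊² − V₀² + |Z|²·I₊²)/2`, attained exactly at
`Q̃g = ±√((V₊·I₊·|Z|)² − P̂²)`; at `(P̂, Q̂)` with the negative root `Q̂`, the
delivered real power equals `P_g − I₊²·R`. -/
theorem thermal_loss_induced_limit
    (V₀ Vp R X Ip Phat : ℝ) (hV₀ : 0 < V₀) (hVp : 0 < Vp)
    (hR : 0 < R) (hX : 0 < X) (hIp : 0 < Ip)
    (hPhat : Phat =
      (Vp ^ 2 - V₀ ^ 2 + Real.sqrt (R ^ 2 + X ^ 2) ^ 2 * Ip ^ 2) / 2)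
    (hlo : Vp ^ 2 - V₀ * Vp ≤ Phat) (hhi : Phat ≤ Vp ^ 2 + V₀ * Vp) :
    IsGreatest
        {p : ℝ | ∃ q : ℝ, (p - Vp ^ 2) ^ 2 + q ^ 2 = V₀ ^ 2 * Vp ^ 2 ∧
          V₀ ^ 2 + 2 * p - Vp ^ 2 ≤ Real.sqrt (R ^ 2 + X ^ 2) ^ 2 * Ip ^ 2}
        Phat ∧
      (∀ q : ℝ,
        ((Phat - Vp ^ 2) ^ 2 + q ^ 2 = V₀ ^ 2 * Vp ^ 2 ∧
            V₀ ^ 2 + 2 * Phat - Vp ^ 2 ≤ Real.sqrt (R ^ 2 + X ^ 2) ^ 2 * Ip ^ 2) ↔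
          (q = Real.sqrt ((Vp * Ip * Real.sqrt (R ^ 2 + X ^ 2)) ^ 2 - Phat ^ 2) ∨
            q = -Real.sqrt ((Vp * Ip * Real.sqrt (R ^ 2 + X ^ 2)) ^ 2 - Phat ^ 2))) ∧
      ((R * Phat -
          X * (-Real.sqrt ((Vp * Ip * Real.sqrt (R ^ 2 + X ^ 2)) ^ 2 - Phat ^ 2))) /
            Real.sqrt (R ^ 2 + X ^ 2) ^ 2 -
          R * (V₀ ^ 2 + 2 * Phat - Vp ^ 2) / Real.sqrt (R ^ 2 + X ^ 2) ^ 2 =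
        (R * Phat -
          X * (-Real.sqrt ((Vp * Ip * Real.sqrt (R ^ 2 + X ^ 2)) ^ 2 - Phat ^ 2))) /
            Real.sqrt (R ^ 2 + X ^ 2) ^ 2 - Ip ^ 2 * R) :=
  thermal_loss_induced_limit_general V₀ Vp R X Ip Phat hR hPhat hlo hhi
end

section
/- (Marginal loss-induced maximum power transfer, Theorem 1, voltage-constrained case.) Fix V₀ > 0, V₊ > 0, R > 0, X > 0, |Z| := √(R² + X²). For (P̃, Q̃) ∈ ℝ² on the voltage locus (P̃ − V₊²)² + Q̃² = V₀²·V₊², define the delivered real power P₀(P̃, Q̃) := (R·(V₊² − V₀²) − R·P̃ − X·Q̃)/|Z|². Then P₀(P̃, Q̃) ≤ (V₀/|Z|)·(V₊ − V₀·R/|Z|), with equality if and only if (P̃, Q̃) = (P̃′, Q̃′) where P̃′ := V₊·(V₊ − V₀·R/|Z|) and Q̃′ := −V₀·V₊·X/|Z|. Equivalently, with λ := R/X, the maximum delivered power is P₀′ = (V₀²/|Z|)·(V₊/V₀ − λ/√(1 + λ²)). -/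
/-!
Write `s = √(R² + X²)`, `u = P̃ − V₊²` and `r = V₀·V₊`. Up to the constant `−R·V₀²`, the delivered
power is `−(R·u + X·Q̃)/s²`, and the voltage locus is the circle `u² + Q̃² = r²`. By Lagrange's
identity `(R·u + X·Q̃)² + (R·Q̃ − X·u)² = s²·r²`, so `R·u + X·Q̃ ≥ −s·r`, with equality exactly when
`(u, Q̃)` is the point `−(r/s)·(R, X)` of the circle.
-/

open Real

section CauchySchwarz

variable {a b u v r : ℝ}

theorem neg_sqrt_mul_le_of_sq_add_sq_eq (hr : 0 ≤ r) (h : u ^ 2 + v ^ 2 = r ^ 2) :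
    -(√(a ^ 2 + b ^ 2) * r) ≤ a * u + b * v := by
  have hbound : |a * u + b * v| ≤ √(a ^ 2 + b ^ 2) * r := by
    rw [← sqrt_sq hr, ← sqrt_mul (by positivity)]
    exact abs_le_sqrt (by nlinarith [sq_nonneg (a * v - b * u)])
  exact (abs_le.mp hbound).1

theorem eq_neg_sqrt_mul_iff_of_sq_add_sq_eq (hab : a ^ 2 + b ^ 2 ≠ 0) (h : u ^ 2 + v ^ 2 = r ^ 2) :
    a * u + b * v = -(√(a ^ 2 + b ^ 2) * r) ↔
      u = -(r * a / √(a ^ 2 + b ^ 2)) ∧ v = -(r * b / √(a ^ 2 + b ^ 2)) := by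
  set s := √(a ^ 2 + b ^ 2)
  have hs2 : s ^ 2 = a ^ 2 + b ^ 2 := sq_sqrt (by positivity)
  have hs : s ≠ 0 := by positivity
  constructor
  · intro hdot
    have hcross : a * v - b * u = 0 := by
      apply pow_eq_zero_iff (n := 2) two_ne_zero |>.mp
      linear_combination (a ^ 2 + b ^ 2) * h - (a * u + b * v - s * r) * hdot - r ^ 2 * hs2
    constructor
    · field_simp
      apply mul_left_cancel₀ hs
      linear_combination a * hdot - b * hcross + u * hs2
    · field_simp
      apply mul_left_cancel₀ hs
      linear_combination b * hdot + a * hcross + v * hs2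
  · rintro ⟨rfl, rfl⟩
    field_simp
    linear_combination r * hs2

end CauchySchwarz

section TwoBus

variable {V₀ Vp R X s P Q : ℝ}

theorem deliveredPower_eq_sub (hs : s ≠ 0) :
    (R * (Vp ^ 2 - V₀ ^ 2) - R * P - X * Q) / s ^ 2 =
      V₀ / s * (Vp - V₀ * R / s) - (R * (P - Vp ^ 2) + X * Q + s * (V₀ * Vp)) / s ^ 2 := by
  field_simp
  ring

theorem maxDeliveredPower_eq (hX : 0 < X) :
    V₀ / √(R ^ 2 + X ^ 2) * (Vp - V₀ * R / √(R ^ 2 + X ^ 2)) =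
      V₀ ^ 2 / √(R ^ 2 + X ^ 2) * (Vp / V₀ - R / X / √(1 + (R / X) ^ 2)) := by
  have hsqrt : √(1 + (R / X) ^ 2) = √(R ^ 2 + X ^ 2) / X := by
    rw [show 1 + (R / X) ^ 2 = (R ^ 2 + X ^ 2) / X ^ 2 by field_simp; ring,
      sqrt_div' _ (sq_nonneg X), sqrt_sq hX.le]
  rw [hsqrt]
  rcases eq_or_ne V₀ 0 with rfl | hV₀
  · simp
  · field_simp

end TwoBus

theorem marginal_loss_induced_max_power_general
    (V₀ Vp R X : ℝ) (hV₀ : 0 < V₀) (hVp : 0 < Vp) (hX : 0 < X) :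
    (∀ P Q : ℝ, (P - Vp ^ 2) ^ 2 + Q ^ 2 = V₀ ^ 2 * Vp ^ 2 →
        ((R * (Vp ^ 2 - V₀ ^ 2) - R * P - X * Q) / Real.sqrt (R ^ 2 + X ^ 2) ^ 2 ≤
            (V₀ / Real.sqrt (R ^ 2 + X ^ 2)) *
              (Vp - V₀ * R / Real.sqrt (R ^ 2 + X ^ 2)) ∧
          ((R * (Vp ^ 2 - V₀ ^ 2) - R * P - X * Q) / Real.sqrt (R ^ 2 + X ^ 2) ^ 2 =
              (V₀ / Real.sqrt (R ^ 2 + X ^ 2)) *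
                (Vp - V₀ * R / Real.sqrt (R ^ 2 + X ^ 2)) ↔
            (P = Vp * (Vp - V₀ * R / Real.sqrt (R ^ 2 + X ^ 2)) ∧
              Q = -(V₀ * Vp * X / Real.sqrt (R ^ 2 + X ^ 2)))))) ∧
      (V₀ / Real.sqrt (R ^ 2 + X ^ 2)) *
          (Vp - V₀ * R / Real.sqrt (R ^ 2 + X ^ 2)) =
        (V₀ ^ 2 / Real.sqrt (R ^ 2 + X ^ 2)) *
          (Vp / V₀ - (R / X) / Real.sqrt (1 + (R / X) ^ 2)) := by
  refine ⟨fun P Q hcircle => ?_, maxDeliveredPower_eq hX⟩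
  have hRX : R ^ 2 + X ^ 2 ≠ 0 := by positivity
  have hs : √(R ^ 2 + X ^ 2) ≠ 0 := by positivity
  set s := √(R ^ 2 + X ^ 2)
  have hcircle' : (P - Vp ^ 2) ^ 2 + Q ^ 2 = (V₀ * Vp) ^ 2 := by rw [hcircle, mul_pow]
  rw [deliveredPower_eq_sub hs, sub_le_self_iff, sub_eq_self, div_eq_zero_iff,
    or_iff_left (pow_ne_zero 2 hs), ← eq_neg_iff_add_eq_zero,
    eq_neg_sqrt_mul_iff_of_sq_add_sq_eq hRX hcircle']
  refine ⟨div_nonneg ?_ (sq_nonneg _), ?_⟩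
  · linarith [neg_sqrt_mul_le_of_sq_add_sq_eq (a := R) (b := X) (by positivity) hcircle']
  · rw [sub_eq_iff_eq_add, show -(V₀ * Vp * R / s) + Vp ^ 2 = Vp * (Vp - V₀ * R / s) by ring]

/-- Marginal loss-induced maximum power transfer (Theorem 1, voltage-constrained
case): on the voltage locus `(P̃ − V₊²)² + Q̃² = V₀²·V₊²` the delivered real
power `P₀(P̃, Q̃) = (R·(V₊² − V₀²) − R·P̃ − X·Q̃)/|Z|²` is at most
`(V₀/|Z|)·(V₊ − V₀·R/|Z|)`, with equality exactly at
`(P̃′, Q̃′) = (V₊·(V₊ − V₀·R/|Z|), −V₀·V₊·X/|Z|)`; equivalently, with `λ = R/X`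
the maximum is `(V₀²/|Z|)·(V₊/V₀ − λ/√(1 + λ²))`. -/
theorem marginal_loss_induced_max_power
    (V₀ Vp R X : ℝ) (hV₀ : 0 < V₀) (hVp : 0 < Vp) (hR : 0 < R) (hX : 0 < X) :
    (∀ P Q : ℝ, (P - Vp ^ 2) ^ 2 + Q ^ 2 = V₀ ^ 2 * Vp ^ 2 →
        ((R * (Vp ^ 2 - V₀ ^ 2) - R * P - X * Q) / Real.sqrt (R ^ 2 + X ^ 2) ^ 2 ≤
            (V₀ / Real.sqrt (R ^ 2 + X ^ 2)) *
              (Vp - V₀ * R / Real.sqrt (R ^ 2 + X ^ 2)) ∧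
          ((R * (Vp ^ 2 - V₀ ^ 2) - R * P - X * Q) / Real.sqrt (R ^ 2 + X ^ 2) ^ 2 =
              (V₀ / Real.sqrt (R ^ 2 + X ^ 2)) *
                (Vp - V₀ * R / Real.sqrt (R ^ 2 + X ^ 2)) ↔
            (P = Vp * (Vp - V₀ * R / Real.sqrt (R ^ 2 + X ^ 2)) ∧
              Q = -(V₀ * Vp * X / Real.sqrt (R ^ 2 + X ^ 2)))))) ∧
      (V₀ / Real.sqrt (R ^ 2 + X ^ 2)) *
          (Vp - V₀ * R / Real.sqrt (R ^ 2 + X ^ 2)) =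
        (V₀ ^ 2 / Real.sqrt (R ^ 2 + X ^ 2)) *
          (Vp / V₀ - (R / X) / Real.sqrt (1 + (R / X) ^ 2)) :=
  marginal_loss_induced_max_power_general V₀ Vp R X hV₀ hVp hX
end

section
/- (Theorem 1, with voltage and thermal constraints.) Fix V₀ > 0, V₊ > 0, R > 0, X > 0, |Z| := √(R² + X²), I₊ > 0, and set P̂ := (V₊² − V₀² + |Z|²·I₊²)/2, P̃′ := V₊·(V₊ − V₀·R/|Z|), Q̃′ := −V₀·V₊·X/|Z|. Assume the feasible arc is nonempty, i.e. P̂ ≥ V₊² − V₀·V₊. Consider maximising the delivered real power P₀(P̃, Q̃) := (R·(V₊² − V₀²) − R·P̃ − X·Q̃)/|Z|² over all (P̃, Q̃) with (P̃ − V₊²)² + Q̃² = V₀²·V₊² and P̃ ≤ P̂. If P̃′ ≤ P̂, the maximum is attained at (P̃′, Q̃′) with value (V₀/|Z|)·(V₊ − V₀·R/|Z|); if P̂ < P̃′, the maximum is attained at (P̂, −√(V₀²·V₊² − (P̂ − V₊²)²)). In both cases the optimal P̃ equals min{P̂, P̃′}. -/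
/-!
In coordinates `a = P̃ − V₊²` centred on the voltage circle, of radius `r = V₀V₊`, the delivered
power is an increasing affine function of `−(R a + X Q̃)`. By Cauchy–Schwarz this is at most
`|Z| r` on the circle, with equality only at `−(r/|Z|)(R, X)`, whose abscissa is `P̃′ − V₊²`.
If the thermal limit cuts this point off: for given `a` the lower point `Q̃ = −√(r² − a²)` is
best, and `a ↦ −R a + X √(r² − a²)` is strictly increasing up to that abscissa, so the optimum
sits at the thermal limit `a = P̂ − V₊²`.
-/

open Set

section CircleArc

variable {R X r a b Q : ℝ}

theorem neg_mul_add_mul_le_sqrt_mul (hr : 0 ≤ r) (h : a ^ 2 + Q ^ 2 = r ^ 2) :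
    -(R * a + X * Q) ≤ √(R ^ 2 + X ^ 2) * r := by
  have lagrange : (R * a + X * Q) ^ 2 + (X * a - R * Q) ^ 2 = (R ^ 2 + X ^ 2) * r ^ 2 := by
    rw [← h]; ring
  calc -(R * a + X * Q) ≤ |R * a + X * Q| := neg_le_abs _
    _ ≤ √((R ^ 2 + X ^ 2) * r ^ 2) :=
      Real.abs_le_sqrt (by nlinarith [sq_nonneg (X * a - R * Q)])
    _ = √(R ^ 2 + X ^ 2) * r := by rw [Real.sqrt_mul (by positivity), Real.sqrt_sq hr]

theorem eq_neg_mul_div_sqrt_of_sqrt_mul_le (hRX : 0 < R ^ 2 + X ^ 2) (hr : 0 ≤ r)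
    (h : a ^ 2 + Q ^ 2 = r ^ 2) (hmax : √(R ^ 2 + X ^ 2) * r ≤ -(R * a + X * Q)) :
    a = -(r * R) / √(R ^ 2 + X ^ 2) := by
  have hs : 0 < √(R ^ 2 + X ^ 2) := Real.sqrt_pos.2 hRX
  have hs2 : √(R ^ 2 + X ^ 2) ^ 2 = R ^ 2 + X ^ 2 := Real.sq_sqrt hRX.le
  have heq : R * a + X * Q = -(√(R ^ 2 + X ^ 2) * r) := by
    linarith [neg_mul_add_mul_le_sqrt_mul (R := R) (X := X) hr h]
  -- equality in Cauchy–Schwarz forces `(a, Q)` to be parallel to `(R, X)`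
  have hparallel : X * a - R * Q = 0 := by
    refine pow_eq_zero_iff two_ne_zero |>.1 ?_
    linear_combination (R ^ 2 + X ^ 2) * h - (R * a + X * Q - √(R ^ 2 + X ^ 2) * r) * heq -
      r ^ 2 * hs2
  rw [eq_div_iff hs.ne']
  refine mul_left_cancel₀ hs.ne' ?_
  linear_combination R * heq + X * hparallel + a * hs2

theorem neg_mul_add_mul_le_neg_mul_add_mul_neg_sqrt (hX : 0 ≤ X) (h : a ^ 2 + Q ^ 2 = r ^ 2) :
    -(R * a + X * Q) ≤ -(R * a + X * -√(r ^ 2 - a ^ 2)) := by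
  rw [← h, add_sub_cancel_left, Real.sqrt_sq_eq_abs]
  linarith [mul_le_mul_of_nonneg_left (neg_abs_le Q) hX]

theorem neg_mul_div_sqrt_nonpos (hr : 0 ≤ r) (hR : 0 ≤ R) : -(r * R) / √(R ^ 2 + X ^ 2) ≤ 0 :=
  div_nonpos_of_nonpos_of_nonneg (neg_nonpos.2 (mul_nonneg hr hR)) (Real.sqrt_nonneg _)

theorem sq_le_sq_of_mem_Icc_neg_mul_div_sqrt (hr : 0 ≤ r) (hR : 0 ≤ R)
    (ha : a ∈ Icc (-r) (-(r * R) / √(R ^ 2 + X ^ 2))) : a ^ 2 ≤ r ^ 2 :=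
  sq_le_sq' ha.1 (ha.2.trans ((neg_mul_div_sqrt_nonpos hr hR).trans hr))

theorem mul_sqrt_sq_sub_sq_le_neg_mul (hR : 0 ≤ R) (hX : 0 < X) (hr : 0 ≤ r)
    (ha : a ∈ Icc (-r) (-(r * R) / √(R ^ 2 + X ^ 2))) : R * √(r ^ 2 - a ^ 2) ≤ -(X * a) := by
  have hs : 0 < √(R ^ 2 + X ^ 2) := Real.sqrt_pos.2 (by positivity)
  have ha0 : a ≤ 0 := ha.2.trans (neg_mul_div_sqrt_nonpos hr hR)
  have hcorner : (r * R) ^ 2 ≤ (-a * √(R ^ 2 + X ^ 2)) ^ 2 :=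
    pow_le_pow_left₀ (by positivity) (by linarith [(le_div_iff₀ hs).1 ha.2]) 2
  rw [mul_pow, mul_pow, Real.sq_sqrt (by positivity)] at hcorner
  refine le_of_pow_le_pow_left₀ two_ne_zero (by nlinarith) ?_
  rw [mul_pow, Real.sq_sqrt (sub_nonneg.2 (sq_le_sq_of_mem_Icc_neg_mul_div_sqrt hr hR ha))]
  nlinarith

theorem mul_sqrt_sq_sub_sq_lt_neg_mul (hR : 0 ≤ R) (hX : 0 < X) (hr : 0 ≤ r) (ha₁ : -r ≤ a)
    (ha₂ : a < -(r * R) / √(R ^ 2 + X ^ 2)) : R * √(r ^ 2 - a ^ 2) < -(X * a) := by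
  have hs : 0 < √(R ^ 2 + X ^ 2) := Real.sqrt_pos.2 (by positivity)
  have ha0 : a < 0 := ha₂.trans_le (neg_mul_div_sqrt_nonpos hr hR)
  have hcorner : (r * R) ^ 2 < (-a * √(R ^ 2 + X ^ 2)) ^ 2 :=
    pow_lt_pow_left₀ (by linarith [(lt_div_iff₀ hs).1 ha₂]) (by positivity) two_ne_zero
  rw [mul_pow, mul_pow, Real.sq_sqrt (by positivity)] at hcorner
  refine lt_of_pow_lt_pow_left₀ 2 (by nlinarith) ?_
  rw [mul_pow, Real.sq_sqrt (sub_nonneg.2 (sq_le_sq_of_mem_Icc_neg_mul_div_sqrt hr hR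
    ⟨ha₁, ha₂.le⟩))]
  nlinarith

theorem strictMonoOn_neg_mul_add_mul_neg_sqrt (hR : 0 ≤ R) (hX : 0 < X) (hr : 0 ≤ r) :
    StrictMonoOn (fun a => -(R * a + X * -√(r ^ 2 - a ^ 2)))
      (Icc (-r) (-(r * R) / √(R ^ 2 + X ^ 2))) := by
  intro a ha b hb hab
  set u := √(r ^ 2 - a ^ 2)
  set w := √(r ^ 2 - b ^ 2)
  have hu : u ^ 2 = r ^ 2 - a ^ 2 :=
    Real.sq_sqrt (sub_nonneg.2 (sq_le_sq_of_mem_Icc_neg_mul_div_sqrt hr hR ha))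
  have hw : w ^ 2 = r ^ 2 - b ^ 2 :=
    Real.sq_sqrt (sub_nonneg.2 (sq_le_sq_of_mem_Icc_neg_mul_div_sqrt hr hR hb))
  have hua : R * u < -(X * a) := mul_sqrt_sq_sub_sq_lt_neg_mul hR hX hr ha.1 (hab.trans_le hb.2)
  have hwb : R * w ≤ -(X * b) := mul_sqrt_sq_sub_sq_le_neg_mul hR hX hr hb
  -- multiplying the increment by `u + w ≥ 0` turns `w - u` into `(a² - b²) / (u + w)`
  have hfac : (u + w) * (-(R * b + X * -w) - -(R * a + X * -u)) =
      (b - a) * ((-(X * a) - R * u) + (-(X * b) - R * w)) := by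
    linear_combination X * hw - X * hu
  have hpos : 0 < (u + w) * (-(R * b + X * -w) - -(R * a + X * -u)) := by
    rw [hfac]; exact mul_pos (sub_pos.2 hab) (by linarith)
  exact sub_pos.1 (pos_of_mul_pos_right hpos (by positivity))

theorem neg_mul_add_mul_lt_neg_sqrt_of_lt (hR : 0 ≤ R) (hX : 0 < X) (hr : 0 ≤ r)
    (h : a ^ 2 + Q ^ 2 = r ^ 2) (hab : a < b) (hb : b ∈ Icc (-r) (-(r * R) / √(R ^ 2 + X ^ 2))) :
    -(R * a + X * Q) < -(R * b + X * -√(r ^ 2 - b ^ 2)) := by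
  have ha : -r ≤ a := (abs_le_of_sq_le_sq' (by nlinarith) hr).1
  exact (neg_mul_add_mul_le_neg_mul_add_mul_neg_sqrt hX.le h).trans_lt
    (strictMonoOn_neg_mul_add_mul_neg_sqrt hR hX hr ⟨ha, hab.le.trans hb.2⟩ hb hab)

theorem neg_mul_add_mul_le_neg_sqrt_of_le (hR : 0 ≤ R) (hX : 0 < X) (hr : 0 ≤ r)
    (h : a ^ 2 + Q ^ 2 = r ^ 2) (hab : a ≤ b) (hb : b ∈ Icc (-r) (-(r * R) / √(R ^ 2 + X ^ 2))) :
    -(R * a + X * Q) ≤ -(R * b + X * -√(r ^ 2 - b ^ 2)) := by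
  rcases hab.eq_or_lt with rfl | hab
  · exact neg_mul_add_mul_le_neg_mul_add_mul_neg_sqrt hX.le h
  · exact (neg_mul_add_mul_lt_neg_sqrt_of_lt hR hX hr h hab hb).le

end CircleArc

section LossOptimum

variable {V₀ Vp R X : ℝ}

theorem loss_optimum_mem_circle (hRX : 0 < R ^ 2 + X ^ 2) :
    (Vp * (Vp - V₀ * R / √(R ^ 2 + X ^ 2)) - Vp ^ 2) ^ 2 + (-(V₀ * Vp * X / √(R ^ 2 + X ^ 2))) ^ 2 =
      V₀ ^ 2 * Vp ^ 2 := by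
  have hs2 : √(R ^ 2 + X ^ 2) ^ 2 = R ^ 2 + X ^ 2 := Real.sq_sqrt hRX.le
  field_simp
  linear_combination -V₀ ^ 2 * Vp ^ 2 * hs2

theorem neg_mul_add_mul_loss_optimum (hRX : 0 < R ^ 2 + X ^ 2) :
    -(R * (Vp * (Vp - V₀ * R / √(R ^ 2 + X ^ 2)) - Vp ^ 2) +
        X * -(V₀ * Vp * X / √(R ^ 2 + X ^ 2))) = √(R ^ 2 + X ^ 2) * (V₀ * Vp) := by
  have hs2 : √(R ^ 2 + X ^ 2) ^ 2 = R ^ 2 + X ^ 2 := Real.sq_sqrt hRX.le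
  field_simp
  linear_combination -V₀ * Vp * hs2

theorem delivered_power_loss_optimum (hRX : 0 < R ^ 2 + X ^ 2) :
    (R * (Vp ^ 2 - V₀ ^ 2) - R * (Vp * (Vp - V₀ * R / √(R ^ 2 + X ^ 2))) -
        X * -(V₀ * Vp * X / √(R ^ 2 + X ^ 2))) / √(R ^ 2 + X ^ 2) ^ 2 =
      V₀ / √(R ^ 2 + X ^ 2) * (Vp - V₀ * R / √(R ^ 2 + X ^ 2)) := by
  have hnum : R * (Vp ^ 2 - V₀ ^ 2) - R * (Vp * (Vp - V₀ * R / √(R ^ 2 + X ^ 2))) -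
      X * -(V₀ * Vp * X / √(R ^ 2 + X ^ 2)) = -(R * V₀ ^ 2) + √(R ^ 2 + X ^ 2) * (V₀ * Vp) := by
    linarith [neg_mul_add_mul_loss_optimum (V₀ := V₀) (Vp := Vp) hRX]
  rw [hnum]
  field_simp
  ring

theorem delivered_power_le_delivered_power_iff {P Q P' Q' : ℝ} (hRX : 0 < R ^ 2 + X ^ 2) :
    (R * (Vp ^ 2 - V₀ ^ 2) - R * P - X * Q) / √(R ^ 2 + X ^ 2) ^ 2 ≤
        (R * (Vp ^ 2 - V₀ ^ 2) - R * P' - X * Q') / √(R ^ 2 + X ^ 2) ^ 2 ↔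
      -(R * (P - Vp ^ 2) + X * Q) ≤ -(R * (P' - Vp ^ 2) + X * Q') := by
  rw [div_le_div_iff_of_pos_right (by positivity)]
  constructor <;> intro h <;> linarith

theorem thermal_limit_sub_mem_Icc {Phat : ℝ} (hfeas : Vp ^ 2 - V₀ * Vp ≤ Phat)
    (hlt : Phat < Vp * (Vp - V₀ * R / √(R ^ 2 + X ^ 2))) :
    Phat - Vp ^ 2 ∈ Icc (-(V₀ * Vp)) (-(V₀ * Vp * R) / √(R ^ 2 + X ^ 2)) := by
  have hPt : Vp * (Vp - V₀ * R / √(R ^ 2 + X ^ 2)) =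
      Vp ^ 2 + -(V₀ * Vp * R) / √(R ^ 2 + X ^ 2) := by ring
  exact ⟨by linarith, by linarith⟩

theorem thermal_optimum_mem_circle {Phat : ℝ} (hr : 0 ≤ V₀ * Vp) (hR : 0 ≤ R)
    (hfeas : Vp ^ 2 - V₀ * Vp ≤ Phat) (hlt : Phat < Vp * (Vp - V₀ * R / √(R ^ 2 + X ^ 2))) :
    (Phat - Vp ^ 2) ^ 2 + (-√(V₀ ^ 2 * Vp ^ 2 - (Phat - Vp ^ 2) ^ 2)) ^ 2 = V₀ ^ 2 * Vp ^ 2 := by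
  have hb := sq_le_sq_of_mem_Icc_neg_mul_div_sqrt hr hR (thermal_limit_sub_mem_Icc hfeas hlt)
  rw [mul_pow] at hb
  rw [neg_sq, Real.sq_sqrt (sub_nonneg.2 hb)]
  ring

end LossOptimum

theorem loss_induced_max_power_with_thermal_general
    (V₀ Vp R X Phat : ℝ) (hV₀ : 0 < V₀) (hVp : 0 < Vp)
    (hR : 0 < R) (hX : 0 < X)
    (hfeas : Vp ^ 2 - V₀ * Vp ≤ Phat) :
    (Vp * (Vp - V₀ * R / Real.sqrt (R ^ 2 + X ^ 2)) ≤ Phat →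
        IsGreatest
          {p₀ : ℝ | ∃ P Q : ℝ,
            (P - Vp ^ 2) ^ 2 + Q ^ 2 = V₀ ^ 2 * Vp ^ 2 ∧ P ≤ Phat ∧
            p₀ = (R * (Vp ^ 2 - V₀ ^ 2) - R * P - X * Q) /
              Real.sqrt (R ^ 2 + X ^ 2) ^ 2}
          ((R * (Vp ^ 2 - V₀ ^ 2) -
              R * (Vp * (Vp - V₀ * R / Real.sqrt (R ^ 2 + X ^ 2))) -
              X * (-(V₀ * Vp * X / Real.sqrt (R ^ 2 + X ^ 2)))) /
            Real.sqrt (R ^ 2 + X ^ 2) ^ 2) ∧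
        (R * (Vp ^ 2 - V₀ ^ 2) -
            R * (Vp * (Vp - V₀ * R / Real.sqrt (R ^ 2 + X ^ 2))) -
            X * (-(V₀ * Vp * X / Real.sqrt (R ^ 2 + X ^ 2)))) /
          Real.sqrt (R ^ 2 + X ^ 2) ^ 2 =
          (V₀ / Real.sqrt (R ^ 2 + X ^ 2)) *
            (Vp - V₀ * R / Real.sqrt (R ^ 2 + X ^ 2))) ∧
      (Phat < Vp * (Vp - V₀ * R / Real.sqrt (R ^ 2 + X ^ 2)) →
        IsGreatest
          {p₀ : ℝ | ∃ P Q : ℝ,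
            (P - Vp ^ 2) ^ 2 + Q ^ 2 = V₀ ^ 2 * Vp ^ 2 ∧ P ≤ Phat ∧
            p₀ = (R * (Vp ^ 2 - V₀ ^ 2) - R * P - X * Q) /
              Real.sqrt (R ^ 2 + X ^ 2) ^ 2}
          ((R * (Vp ^ 2 - V₀ ^ 2) - R * Phat -
              X * (-Real.sqrt (V₀ ^ 2 * Vp ^ 2 - (Phat - Vp ^ 2) ^ 2))) /
            Real.sqrt (R ^ 2 + X ^ 2) ^ 2)) ∧
      (∀ P Q : ℝ,
        (P - Vp ^ 2) ^ 2 + Q ^ 2 = V₀ ^ 2 * Vp ^ 2 → P ≤ Phat →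
        (∀ P' Q' : ℝ,
          (P' - Vp ^ 2) ^ 2 + Q' ^ 2 = V₀ ^ 2 * Vp ^ 2 → P' ≤ Phat →
          (R * (Vp ^ 2 - V₀ ^ 2) - R * P' - X * Q') /
              Real.sqrt (R ^ 2 + X ^ 2) ^ 2 ≤
            (R * (Vp ^ 2 - V₀ ^ 2) - R * P - X * Q) /
              Real.sqrt (R ^ 2 + X ^ 2) ^ 2) →
        P = min Phat (Vp * (Vp - V₀ * R / Real.sqrt (R ^ 2 + X ^ 2)))) := by
  have hRX : 0 < R ^ 2 + X ^ 2 := by positivity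
  have hr : 0 ≤ V₀ * Vp := by positivity
  have hcircle {P Q : ℝ} (h : (P - Vp ^ 2) ^ 2 + Q ^ 2 = V₀ ^ 2 * Vp ^ 2) :
      (P - Vp ^ 2) ^ 2 + Q ^ 2 = (V₀ * Vp) ^ 2 := h.trans (mul_pow V₀ Vp 2).symm
  refine ⟨fun hle => ⟨⟨⟨_, _, loss_optimum_mem_circle hRX, hle, rfl⟩, ?_⟩,
      delivered_power_loss_optimum hRX⟩,
    fun hlt => ⟨⟨Phat, _, thermal_optimum_mem_circle hr hR.le hfeas hlt, le_rfl, rfl⟩, ?_⟩,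
    fun P Q hc hP hmax => ?_⟩
  · rintro _ ⟨P, Q, hc, -, rfl⟩
    rw [delivered_power_le_delivered_power_iff hRX, neg_mul_add_mul_loss_optimum hRX]
    exact neg_mul_add_mul_le_sqrt_mul hr (hcircle hc)
  · rintro _ ⟨P, Q, hc, hP, rfl⟩
    rw [delivered_power_le_delivered_power_iff hRX, ← mul_pow]
    exact neg_mul_add_mul_le_neg_sqrt_of_le hR.le hX hr (hcircle hc) (sub_le_sub_right hP _)
      (thermal_limit_sub_mem_Icc hfeas hlt)
  rcases le_or_gt (Vp * (Vp - V₀ * R / √(R ^ 2 + X ^ 2))) Phat with hle | hlt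
  · rw [min_eq_right hle]
    have hopt := (delivered_power_le_delivered_power_iff hRX).1
      (hmax _ _ (loss_optimum_mem_circle hRX) hle)
    rw [neg_mul_add_mul_loss_optimum hRX] at hopt
    linear_combination eq_neg_mul_div_sqrt_of_sqrt_mul_le hRX hr (hcircle hc) hopt
  · rw [min_eq_left hlt.le]
    by_contra hne
    have hopt := (delivered_power_le_delivered_power_iff hRX).1
      (hmax Phat _ (thermal_optimum_mem_circle hr hR.le hfeas hlt) le_rfl)
    rw [← mul_pow] at hopt
    exact hopt.not_gt (neg_mul_add_mul_lt_neg_sqrt_of_lt hR.le hX hr (hcircle hc)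
      (sub_lt_sub_right (hP.lt_of_ne hne) _) (thermal_limit_sub_mem_Icc hfeas hlt))

/-- Theorem 1 with voltage and thermal constraints: maximising the delivered
real power over the voltage locus intersected with the thermal constraint
`P̃ ≤ P̂`, the maximum is attained at `(P̃′, Q̃′)` (with value
`(V₀/|Z|)·(V₊ − V₀·R/|Z|)`) when `P̃′ ≤ P̂`, and at
`(P̂, −√(V₀²·V₊² − (P̂ − V₊²)²))` when `P̂ < P̃′`; in both cases the optimal
`P̃` equals `min{P̂, P̃′}`. -/
theorem loss_induced_max_power_with_thermal
    (V₀ Vp R X Ip Phat : ℝ) (hV₀ : 0 < V₀) (hVp : 0 < Vp)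
    (hR : 0 < R) (hX : 0 < X) (hIp : 0 < Ip)
    (hPhat : Phat =
      (Vp ^ 2 - V₀ ^ 2 + Real.sqrt (R ^ 2 + X ^ 2) ^ 2 * Ip ^ 2) / 2)
    (hfeas : Vp ^ 2 - V₀ * Vp ≤ Phat) :
    (Vp * (Vp - V₀ * R / Real.sqrt (R ^ 2 + X ^ 2)) ≤ Phat →
        IsGreatest
          {p₀ : ℝ | ∃ P Q : ℝ,
            (P - Vp ^ 2) ^ 2 + Q ^ 2 = V₀ ^ 2 * Vp ^ 2 ∧ P ≤ Phat ∧
            p₀ = (R * (Vp ^ 2 - V₀ ^ 2) - R * P - X * Q) /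
              Real.sqrt (R ^ 2 + X ^ 2) ^ 2}
          ((R * (Vp ^ 2 - V₀ ^ 2) -
              R * (Vp * (Vp - V₀ * R / Real.sqrt (R ^ 2 + X ^ 2))) -
              X * (-(V₀ * Vp * X / Real.sqrt (R ^ 2 + X ^ 2)))) /
            Real.sqrt (R ^ 2 + X ^ 2) ^ 2) ∧
        (R * (Vp ^ 2 - V₀ ^ 2) -
            R * (Vp * (Vp - V₀ * R / Real.sqrt (R ^ 2 + X ^ 2))) -
            X * (-(V₀ * Vp * X / Real.sqrt (R ^ 2 + X ^ 2)))) /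
          Real.sqrt (R ^ 2 + X ^ 2) ^ 2 =
          (V₀ / Real.sqrt (R ^ 2 + X ^ 2)) *
            (Vp - V₀ * R / Real.sqrt (R ^ 2 + X ^ 2))) ∧
      (Phat < Vp * (Vp - V₀ * R / Real.sqrt (R ^ 2 + X ^ 2)) →
        IsGreatest
          {p₀ : ℝ | ∃ P Q : ℝ,
            (P - Vp ^ 2) ^ 2 + Q ^ 2 = V₀ ^ 2 * Vp ^ 2 ∧ P ≤ Phat ∧
            p₀ = (R * (Vp ^ 2 - V₀ ^ 2) - R * P - X * Q) /
              Real.sqrt (R ^ 2 + X ^ 2) ^ 2}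
          ((R * (Vp ^ 2 - V₀ ^ 2) - R * Phat -
              X * (-Real.sqrt (V₀ ^ 2 * Vp ^ 2 - (Phat - Vp ^ 2) ^ 2))) /
            Real.sqrt (R ^ 2 + X ^ 2) ^ 2)) ∧
      (∀ P Q : ℝ,
        (P - Vp ^ 2) ^ 2 + Q ^ 2 = V₀ ^ 2 * Vp ^ 2 → P ≤ Phat →
        (∀ P' Q' : ℝ,
          (P' - Vp ^ 2) ^ 2 + Q' ^ 2 = V₀ ^ 2 * Vp ^ 2 → P' ≤ Phat →
          (R * (Vp ^ 2 - V₀ ^ 2) - R * P' - X * Q') /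
              Real.sqrt (R ^ 2 + X ^ 2) ^ 2 ≤
            (R * (Vp ^ 2 - V₀ ^ 2) - R * P - X * Q) /
              Real.sqrt (R ^ 2 + X ^ 2) ^ 2) →
        P = min Phat (Vp * (Vp - V₀ * R / Real.sqrt (R ^ 2 + X ^ 2)))) :=
  loss_induced_max_power_with_thermal_general V₀ Vp R X Phat hV₀ hVp hR hX hfeas
end

section
/- Fix V₀ > 0, V₊ > 0, R > 0, X > 0, |Z| := √(R² + X²), λ := R/X, and let P̃′ := V₊·(V₊ − V₀·R/|Z|), Q̃′ := −V₀·V₊·X/|Z| be the marginal loss-induced optimum on the voltage locus |V_g| = V₊. Then the discriminant at this point satisfies V₀⁴/4 + V₀²·P̃′ − (Q̃′)² = V₀²·(V₀/2 − V₊·R/|Z|)². Consequently, assuming 2·V₊ > V₀, the marginal optimum lies on the solution boundary (zero discriminant) if and only if λ = V₀/√(4·V₊² − V₀²). -/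
/-! The discriminant at the marginal optimum is a perfect square once `|Z|² = R² + X²` is
used, so it vanishes exactly when `V₀·|Z| = 2·V₊·R`. Squaring both sides (all quantities are
positive) turns this into `R²·(4·V₊² − V₀²) = V₀²·X²`, which is the square of
`R/X = V₀/√(4·V₊² − V₀²)`. -/

theorem discriminant_marginalOptimum_eq_sq {V₀ Vp R X s : ℝ} (hs : s ^ 2 = R ^ 2 + X ^ 2)
    (hs₀ : s ≠ 0) :
    V₀ ^ 4 / 4 + V₀ ^ 2 * (Vp * (Vp - V₀ * R / s)) - (-(V₀ * Vp * X / s)) ^ 2 =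
      V₀ ^ 2 * (V₀ / 2 - Vp * R / s) ^ 2 := by
  field_simp
  linear_combination 16 * V₀ ^ 2 * Vp ^ 2 * hs

theorem sq_mul_sq_sub_div_eq_zero_iff {V₀ Vp R s : ℝ} (hV₀ : V₀ ≠ 0) (hs : s ≠ 0) :
    V₀ ^ 2 * (V₀ / 2 - Vp * R / s) ^ 2 = 0 ↔ V₀ * s = 2 * Vp * R := by
  rw [mul_eq_zero, or_iff_right (pow_ne_zero 2 hV₀), sq_eq_zero_iff, sub_eq_zero,
    div_eq_div_iff two_ne_zero hs]
  constructor <;> intro h <;> linarith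

theorem mul_sqrt_eq_iff_div_eq_div_sqrt {V₀ Vp R X : ℝ} (hV₀ : 0 < V₀) (hR : 0 < R)
    (hX : 0 < X) (hVp : V₀ < 2 * Vp) :
    V₀ * √(R ^ 2 + X ^ 2) = 2 * Vp * R ↔ R / X = V₀ / √(4 * Vp ^ 2 - V₀ ^ 2) := by
  have hVp₀ : 0 < Vp := by linarith
  have hd : 0 < 4 * Vp ^ 2 - V₀ ^ 2 := by nlinarith
  have ht : 0 < √(4 * Vp ^ 2 - V₀ ^ 2) := Real.sqrt_pos.mpr hd
  calc V₀ * √(R ^ 2 + X ^ 2) = 2 * Vp * R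
      ↔ (V₀ * √(R ^ 2 + X ^ 2)) ^ 2 = (2 * Vp * R) ^ 2 :=
        (pow_left_inj₀ (by positivity) (by positivity) two_ne_zero).symm
    _ ↔ (R * √(4 * Vp ^ 2 - V₀ ^ 2)) ^ 2 = (V₀ * X) ^ 2 := by
        simp only [mul_pow, Real.sq_sqrt (add_nonneg (sq_nonneg R) (sq_nonneg X)),
          Real.sq_sqrt hd.le]
        constructor <;> intro h <;> linarith
    _ ↔ R * √(4 * Vp ^ 2 - V₀ ^ 2) = V₀ * X :=
        pow_left_inj₀ (by positivity) (by positivity) two_ne_zero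
    _ ↔ R / X = V₀ / √(4 * Vp ^ 2 - V₀ ^ 2) := (div_eq_div_iff hX.ne' ht.ne').symm

theorem marginal_optimum_discriminant_general
    (V₀ Vp R X : ℝ) (hV₀ : 0 < V₀) (hR : 0 < R) (hX : 0 < X) :
    V₀ ^ 4 / 4 + V₀ ^ 2 * (Vp * (Vp - V₀ * R / Real.sqrt (R ^ 2 + X ^ 2))) -
        (-(V₀ * Vp * X / Real.sqrt (R ^ 2 + X ^ 2))) ^ 2 =
      V₀ ^ 2 * (V₀ / 2 - Vp * R / Real.sqrt (R ^ 2 + X ^ 2)) ^ 2 ∧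
    (V₀ < 2 * Vp →
      (V₀ ^ 4 / 4 + V₀ ^ 2 * (Vp * (Vp - V₀ * R / Real.sqrt (R ^ 2 + X ^ 2))) -
          (-(V₀ * Vp * X / Real.sqrt (R ^ 2 + X ^ 2))) ^ 2 = 0 ↔
        R / X = V₀ / Real.sqrt (4 * Vp ^ 2 - V₀ ^ 2))) := by
  have hZ : 0 < √(R ^ 2 + X ^ 2) := by positivity
  have hD := discriminant_marginalOptimum_eq_sq (V₀ := V₀) (Vp := Vp)
    (Real.sq_sqrt (by positivity)) hZ.ne'
  refine ⟨hD, fun hVp => ?_⟩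
  rw [hD, sq_mul_sq_sub_div_eq_zero_iff hV₀.ne' hZ.ne']
  exact mul_sqrt_eq_iff_div_eq_div_sqrt hV₀ hR hX hVp

/-- At the marginal loss-induced optimum
`(P̃′, Q̃′) = (V₊·(V₊ − V₀·R/|Z|), −V₀·V₊·X/|Z|)`, the discriminant equals
`V₀²·(V₀/2 − V₊·R/|Z|)²`; hence (for `2·V₊ > V₀`) it vanishes iff
`λ = R/X = V₀/√(4·V₊² − V₀²)`. -/
theorem marginal_optimum_discriminant
    (V₀ Vp R X : ℝ) (hV₀ : 0 < V₀) (hVp : 0 < Vp) (hR : 0 < R) (hX : 0 < X) :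
    V₀ ^ 4 / 4 + V₀ ^ 2 * (Vp * (Vp - V₀ * R / Real.sqrt (R ^ 2 + X ^ 2))) -
        (-(V₀ * Vp * X / Real.sqrt (R ^ 2 + X ^ 2))) ^ 2 =
      V₀ ^ 2 * (V₀ / 2 - Vp * R / Real.sqrt (R ^ 2 + X ^ 2)) ^ 2 ∧
    (V₀ < 2 * Vp →
      (V₀ ^ 4 / 4 + V₀ ^ 2 * (Vp * (Vp - V₀ * R / Real.sqrt (R ^ 2 + X ^ 2))) -
          (-(V₀ * Vp * X / Real.sqrt (R ^ 2 + X ^ 2))) ^ 2 = 0 ↔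
        R / X = V₀ / Real.sqrt (4 * Vp ^ 2 - V₀ ^ 2))) :=
  marginal_optimum_discriminant_general V₀ Vp R X hV₀ hR hX
end
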